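/- Let N_φ, N_ψ ∈ ℂ, φₙ(x) = (N_φ/(2ⁿ √(n!))) Hₙ(sinh x) e^{−cosh²x}, ψₙ(x) = (2N_ψ/√(n!)) Hₙ(sinh x) cosh x. Define, for smooth compactly supported g : ℝ → ℂ, (a† g)(x) = −(g(x)/cosh x)′ + 2 sinh(x) g(x) and (b g)(x) = −(g(x)/(2 cosh x))′ − (sinh x/(2 cosh²x)) g(x). Then for every smooth compactly supported g and every z ∈ ℂ: Σ_{n≥0} (zⁿ/√(n!)) ∫_ℝ conj((a† g)(x)) φₙ(x) dx = z · Σ_{n≥0} (zⁿ/√(n!)) ∫_ℝ conj(g(x)) φₙ(x) dx, and Σ_{n≥0} (zⁿ/√(n!)) ∫_ℝ conj((b g)(x)) ψₙ(x) dx = z · Σ_{n≥0} (zⁿ/√(n!)) ∫_ℝ conj(g(x)) ψₙ(x) dx, all series converging absolutely. -/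

import Mathlib

set_option maxHeartbeats 1000000

open MeasureTheory

/-- The physicist's Hermite polynomials:
`H₀(y) = 1`, `Hₙ(y) = 2y H_{n−1}(y) − H_{n−1}′(y)`. -/
noncomputable def hermiteH : ℕ → ℝ → ℝ
  | 0 => fun _ => 1
  | n + 1 => fun y => 2 * y * hermiteH n y - deriv (hermiteH n) y

noncomputable def hermP : ℕ → Polynomial ℝ
  | 0 => 1
  | n + 1 => 2 * Polynomial.X * hermP n - (hermP n).derivative

lemma hermiteH_eval : ∀ n y, hermiteH n y = (hermP n).eval y := by
  intro n
  induction n with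
  | zero => intro y; simp [hermiteH, hermP]
  | succ n ih =>
    intro y
    have hfun : hermiteH n = fun y => (hermP n).eval y := funext ih
    simp only [hermiteH, hermP, hfun, Polynomial.deriv]
    simp [Polynomial.eval_mul]

lemma hermP_derivative : ∀ n, (hermP n).derivative = (2 * (n:ℝ)) • hermP (n - 1) := by
  intro n
  induction n with
  | zero => simp [hermP]
  | succ n ih =>
    rcases Nat.eq_zero_or_pos n with h | h
    · subst h
      show (hermP 1).derivative = (2 * ((1:ℕ):ℝ)) • hermP 0
      have h1 : hermP 1 = 2 * Polynomial.X - 0 := by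
        show 2 * Polynomial.X * hermP 0 - (hermP 0).derivative = _
        show 2 * Polynomial.X * 1 - (1 : Polynomial ℝ).derivative = _
        simp
      rw [h1]
      show (2 * Polynomial.X - 0 : Polynomial ℝ).derivative = (2 * ((1:ℕ):ℝ)) • (1 : Polynomial ℝ)
      simp
      simp only [Polynomial.smul_eq_C_mul, mul_one, Nat.cast_one]
      exact (map_ofNat Polynomial.C 2).symm
    · obtain ⟨m, rfl⟩ := Nat.exists_eq_succ_of_ne_zero h.ne'
      show (hermP (m+2)).derivative = (2 * ((m+2:ℕ):ℝ)) • hermP (m+1)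
      have h2 : hermP (m + 2) = 2 * Polynomial.X * hermP (m+1) - (hermP (m+1)).derivative := rfl
      have ih' : (hermP (m+1)).derivative = (2 * ((m+1:ℕ):ℝ)) • hermP m := by
        simpa using ih
      have h1 : hermP (m + 1) = 2 * Polynomial.X * hermP m - (hermP m).derivative := rfl
      rw [h2, Polynomial.derivative_sub, Polynomial.derivative_mul, ih']
      rw [Polynomial.derivative_smul]
      simp only [Polynomial.smul_eq_C_mul, map_mul, map_add, map_natCast, map_ofNat,
        Polynomial.derivative_mul, Polynomial.derivative_X, Polynomial.derivative_ofNat]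
      rw [h1]
      push_cast
      ring

lemma polyContDiff (p : Polynomial ℝ) : ContDiff ℝ (⊤ : ℕ∞) fun x : ℝ => p.eval x := by
  induction p using Polynomial.induction_on' with
  | add p q hp hq => simpa using hp.add hq
  | monomial n a =>
    simp only [Polynomial.eval_monomial]
    exact contDiff_const.mul (contDiff_id.pow n)

lemma hermiteH_contDiff (n : ℕ) : ContDiff ℝ (⊤ : ℕ∞) (hermiteH n) := by
  have : hermiteH n = fun y => (hermP n).eval y := funext (hermiteH_eval n)
  rw [this]; exact polyContDiff _

lemma hermiteH_hasDerivAt (n : ℕ) (y : ℝ) :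
    HasDerivAt (hermiteH n) (2 * (n:ℝ) * hermiteH (n-1) y) y := by
  have h : hermiteH n = fun y => (hermP n).eval y := funext (hermiteH_eval n)
  have := (hermP n).hasDerivAt y
  rw [hermP_derivative n] at this
  rw [h]
  simpa [Polynomial.eval_smul, smul_eq_mul, hermiteH_eval] using this

lemma deriv_hermiteH (n : ℕ) : deriv (hermiteH n) = fun y => 2 * (n:ℝ) * hermiteH (n-1) y :=
  funext fun y => (hermiteH_hasDerivAt n y).deriv

lemma hermiteH_bound (M : ℝ) (hM : 0 ≤ M) :
    ∀ n, ∀ y, |y| ≤ M → |hermiteH n y| ≤ (2*M+2)^n * Real.sqrt n.factorial := by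
  intro n
  induction n using Nat.strong_induction_on with
  | _ n ih =>
    match n with
    | 0 => intro y _; simp [hermiteH]
    | 1 =>
      intro y hy
      have hd : deriv (hermiteH 0) y = 0 := by
        rw [deriv_hermiteH 0]; norm_num
      have h1 : hermiteH 1 y = 2 * y := by
        show 2 * y * hermiteH 0 y - deriv (hermiteH 0) y = 2 * y
        rw [hd]; show 2 * y * 1 - 0 = 2 * y; ring
      rw [h1]
      rw [abs_mul]
      simp only [Nat.factorial_one, Nat.cast_one, Real.sqrt_one, pow_one, mul_one]
      rw [abs_two]
      nlinarith [abs_nonneg y]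
    | (n+2) =>
      intro y hy
      have hrec : hermiteH (n+2) y = 2 * y * hermiteH (n+1) y - 2*((n:ℝ)+1) * hermiteH n y := by
        show 2 * y * hermiteH (n+1) y - deriv (hermiteH (n+1)) y = _
        rw [deriv_hermiteH (n+1)]
        push_cast
        ring_nf
      have h1 := ih (n+1) (by omega) y hy
      have h0 := ih n (by omega) y hy
      rw [hrec]
      have hs : Real.sqrt ((n+2).factorial) =
          Real.sqrt ((n:ℝ)+2) * Real.sqrt ((n:ℝ)+1) * Real.sqrt n.factorial := by
        rw [show ((n+2).factorial) = (n+2) * ((n+1) * n.factorial) by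
          rw [Nat.factorial_succ, Nat.factorial_succ]]
        push_cast
        rw [Real.sqrt_mul (by positivity), Real.sqrt_mul (by positivity)]
        ring
      set s := Real.sqrt n.factorial with hsdef
      have hs1 : Real.sqrt ((n+1).factorial) = Real.sqrt ((n:ℝ)+1) * s := by
        rw [show ((n+1).factorial) = (n+1) * n.factorial by rw [Nat.factorial_succ]]
        push_cast
        rw [Real.sqrt_mul (by positivity)]
      set a := Real.sqrt ((n:ℝ)+1) with hadef
      set b := Real.sqrt ((n:ℝ)+2) with hbdef
      have ha2 : a^2 = (n:ℝ)+1 := Real.sq_sqrt (by positivity)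
      have hb2 : b^2 = (n:ℝ)+2 := Real.sq_sqrt (by positivity)
      have ha0 : 0 ≤ a := Real.sqrt_nonneg _
      have hb0 : 0 ≤ b := Real.sqrt_nonneg _
      have hs0 : 0 ≤ s := Real.sqrt_nonneg _
      have hab : a ≤ b := Real.sqrt_le_sqrt (by linarith)
      have hb1 : 1 ≤ b := by nlinarith
      calc |2 * y * hermiteH (n+1) y - 2*((n:ℝ)+1) * hermiteH n y|
          ≤ |2 * y * hermiteH (n+1) y| + |2*((n:ℝ)+1) * hermiteH n y| := abs_sub _ _
        _ = 2*|y| * |hermiteH (n+1) y| + 2*((n:ℝ)+1) * |hermiteH n y| := by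
            rw [abs_mul, abs_mul, abs_mul, abs_mul, abs_two,
              abs_of_nonneg (show (0:ℝ) ≤ (n:ℝ)+1 by positivity)]
        _ ≤ 2*M * ((2*M+2)^(n+1) * Real.sqrt ((n+1).factorial))
            + 2*((n:ℝ)+1) * ((2*M+2)^n * s) := by
            have hy0 : 0 ≤ |y| := abs_nonneg _
            have := abs_nonneg (hermiteH (n+1) y)
            gcongr <;> nlinarith [abs_nonneg (hermiteH n y)]
        _ ≤ (2*M+2)^(n+2) * Real.sqrt ((n+2).factorial) := by
            rw [hs, hs1]
            have hA : (0:ℝ) < 2*M+2 := by linarith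
            have key : 2*M*(2*M+2)*a + 2*((n:ℝ)+1) ≤ (2*M+2)^2 * (a*b) := by
              have hab' : a ≤ a * b := by nlinarith [mul_le_mul_of_nonneg_left hb1 ha0]
              have h1 : 2*M*(2*M+2)*a ≤ 2*M*(2*M+2)*(a*b) :=
                mul_le_mul_of_nonneg_left hab' (by positivity)
              have h2 : 2*((n:ℝ)+1) = 2*(a*a) := by nlinarith
              have h3 : 2*(a*a) ≤ 2*(a*b) := by nlinarith
              nlinarith [mul_nonneg ha0 hb0]
            have hpn : (0:ℝ) ≤ (2*M+2)^n := le_of_lt (pow_pos hA n)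
            calc 2*M * ((2*M+2)^(n+1) * (a * s)) + 2*((n:ℝ)+1) * ((2*M+2)^n * s)
                = (2*M*(2*M+2)*a + 2*((n:ℝ)+1)) * ((2*M+2)^n * s) := by ring
              _ ≤ ((2*M+2)^2 * (a*b)) * ((2*M+2)^n * s) := by
                  apply mul_le_mul_of_nonneg_right key (by positivity)
              _ = (2*M+2)^(n+2) * (b * a * s) := by ring

lemma summable_pow_div_sqrt_factorial (r : ℝ) (hr : 0 ≤ r) :
    Summable fun n : ℕ => r ^ n / Real.sqrt n.factorial := by
  have hsum : Summable fun n : ℕ => ((2*r^2)^n / n.factorial + (1/2:ℝ)^n) / 2 :=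
    (((Real.summable_pow_div_factorial (2*r^2)).add
      (summable_geometric_of_lt_one (by norm_num) (by norm_num))).div_const 2)
  apply Summable.of_nonneg_of_le
    (fun n => div_nonneg (pow_nonneg hr n) (Real.sqrt_nonneg _)) (fun n => ?_) hsum
  set x := (2*r^2)^n / (n.factorial : ℝ) with hxdef
  set y := (1/2:ℝ)^n with hydef
  have hx : 0 ≤ x := by positivity
  have hy : 0 ≤ y := by positivity
  have hxy : x * y = r^(2*n) / n.factorial := by
    rw [hxdef, hydef, div_mul_eq_mul_div, ← mul_pow]
    ring_nf
  have h1 : r ^ n / Real.sqrt n.factorial = Real.sqrt (x * y) := by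
    rw [hxy, Real.sqrt_div (by positivity : (0:ℝ) ≤ r^(2*n))]
    congr 1
    rw [show (r ^ (2*n) : ℝ) = (r^n)^2 by rw [pow_mul'] , Real.sqrt_sq (pow_nonneg hr n)]
  rw [h1, Real.sqrt_mul hx y]
  nlinarith [sq_nonneg (Real.sqrt x - Real.sqrt y), Real.sq_sqrt hx, Real.sq_sqrt hy,
    Real.sqrt_nonneg x, Real.sqrt_nonneg y]

noncomputable def Cphi (Nφ : ℂ) (n : ℕ) : ℂ := Nφ / ((2:ℂ)^n * (Real.sqrt n.factorial : ℂ))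
noncomputable def Cpsi (Nψ : ℂ) (n : ℕ) : ℂ := 2 * Nψ / (Real.sqrt n.factorial : ℂ)
noncomputable def phiR (n : ℕ) (x : ℝ) : ℝ :=
  hermiteH n (Real.sinh x) * Real.exp (-(Real.cosh x)^2)
noncomputable def psiR (n : ℕ) (x : ℝ) : ℝ := hermiteH n (Real.sinh x) * Real.cosh x
noncomputable def phiC (Nφ : ℂ) (n : ℕ) (x : ℝ) : ℂ := Cphi Nφ n * (phiR n x : ℂ)
noncomputable def psiC (Nψ : ℂ) (n : ℕ) (x : ℝ) : ℂ := Cpsi Nψ n * (psiR n x : ℂ)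

lemma sqrt_fact_pos (n : ℕ) : 0 < Real.sqrt n.factorial :=
  Real.sqrt_pos.2 (by exact_mod_cast n.factorial_pos)

lemma sqrt_fact_succ (n : ℕ) :
    Real.sqrt ((n+1).factorial) = Real.sqrt ((n:ℝ)+1) * Real.sqrt n.factorial := by
  rw [Nat.factorial_succ]
  push_cast
  rw [Real.sqrt_mul (by positivity)]

lemma coeff_phi (Nφ : ℂ) (n : ℕ) :
    Cphi Nφ n * (2*(n:ℂ)) = ((Real.sqrt n : ℝ) : ℂ) * Cphi Nφ (n-1) := by
  cases n with
  | zero => simp [Cphi]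
  | succ m =>
    unfold Cphi
    rw [show (m+1) - 1 = m from rfl, sqrt_fact_succ m]
    have hsq : ((Real.sqrt ((m:ℝ)+1) : ℝ) : ℂ)^2 = ((m:ℝ)+1 : ℂ) := by
      rw [← Complex.ofReal_pow, Real.sq_sqrt (by positivity)]
      push_cast; ring
    have h2 : ((2:ℂ)^(m+1)) ≠ 0 := pow_ne_zero _ two_ne_zero
    have hf : ((Real.sqrt m.factorial : ℝ) : ℂ) ≠ 0 := by
      exact_mod_cast (sqrt_fact_pos m).ne'
    have hs : ((Real.sqrt ((m:ℝ)+1) : ℝ) : ℂ) ≠ 0 := by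
      have : (0:ℝ) < Real.sqrt ((m:ℝ)+1) := Real.sqrt_pos.2 (by positivity)
      exact_mod_cast this.ne'
    push_cast
    rw [show ((m:ℂ)+1) = ((Real.sqrt ((m:ℝ)+1) : ℝ) : ℂ)^2 by rw [hsq]; push_cast; ring]
    field_simp
    ring

lemma coeff_psi (Nψ : ℂ) (n : ℕ) :
    Cpsi Nψ n * (n:ℂ) = ((Real.sqrt n : ℝ) : ℂ) * Cpsi Nψ (n-1) := by
  cases n with
  | zero => simp [Cpsi]
  | succ m =>
    unfold Cpsi
    rw [show (m+1) - 1 = m from rfl, sqrt_fact_succ m]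
    have hsq : ((Real.sqrt ((m:ℝ)+1) : ℝ) : ℂ)^2 = ((m:ℝ)+1 : ℂ) := by
      rw [← Complex.ofReal_pow, Real.sq_sqrt (by positivity)]
      push_cast; ring
    have hf : ((Real.sqrt m.factorial : ℝ) : ℂ) ≠ 0 := by
      exact_mod_cast (sqrt_fact_pos m).ne'
    have hs : ((Real.sqrt ((m:ℝ)+1) : ℝ) : ℂ) ≠ 0 := by
      have : (0:ℝ) < Real.sqrt ((m:ℝ)+1) := Real.sqrt_pos.2 (by positivity)
      exact_mod_cast this.ne'
    push_cast
    rw [show ((m:ℂ)+1) = ((Real.sqrt ((m:ℝ)+1) : ℝ) : ℂ)^2 by rw [hsq]; push_cast; ring]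
    field_simp

lemma hasDerivAt_phiR (n : ℕ) (x : ℝ) :
    HasDerivAt (phiR n)
      ((2*(n:ℝ)*hermiteH (n-1) (Real.sinh x) - 2*Real.sinh x*hermiteH n (Real.sinh x))
        * Real.cosh x * Real.exp (-(Real.cosh x)^2)) x := by
  have hu : HasDerivAt (fun t => hermiteH n (Real.sinh t))
      (2*(n:ℝ)*hermiteH (n-1) (Real.sinh x) * Real.cosh x) x :=
    (hermiteH_hasDerivAt n (Real.sinh x)).comp x (Real.hasDerivAt_sinh x)
  have hw : HasDerivAt (fun t : ℝ => -(Real.cosh t)^2) (-(2*Real.cosh x*Real.sinh x)) x := by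
    have := ((Real.hasDerivAt_cosh x).fun_pow 2).fun_neg
    simpa using this
  have hv := hw.exp
  have h := hu.fun_mul hv
  unfold phiR
  refine h.congr_deriv ?_
  ring

lemma hasDerivAt_psiR (n : ℕ) (x : ℝ) :
    HasDerivAt (psiR n)
      (2*(n:ℝ)*hermiteH (n-1) (Real.sinh x) * (Real.cosh x)^2
        + hermiteH n (Real.sinh x) * Real.sinh x) x := by
  have hu : HasDerivAt (fun t => hermiteH n (Real.sinh t))
      (2*(n:ℝ)*hermiteH (n-1) (Real.sinh x) * Real.cosh x) x :=
    (hermiteH_hasDerivAt n (Real.sinh x)).comp x (Real.hasDerivAt_sinh x)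
  have h := hu.fun_mul (Real.hasDerivAt_cosh x)
  unfold psiR
  refine h.congr_deriv ?_
  ring

lemma hasDerivAt_phiC (Nφ : ℂ) (n : ℕ) (x : ℝ) :
    HasDerivAt (phiC Nφ n)
      ((Real.cosh x : ℂ) * (((Real.sqrt n : ℝ) : ℂ) * phiC Nφ (n-1) x
        - 2 * (Real.sinh x : ℂ) * phiC Nφ n x)) x := by
  have h1 := ((hasDerivAt_phiR n x).ofReal_comp).const_mul (Cphi Nφ n)
  have heq : phiC Nφ n = fun y => Cphi Nφ n * ((phiR n y : ℝ) : ℂ) := rfl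
  rw [heq]
  refine h1.congr_deriv ?_
  symm
  unfold phiC phiR
  have hc := coeff_phi Nφ n
  simp only [Complex.ofReal_mul, Complex.ofReal_sub, Complex.ofReal_ofNat,
    Complex.ofReal_natCast]
  linear_combination (-(((Real.cosh x : ℝ):ℂ) * ((hermiteH (n-1) (Real.sinh x) : ℝ) : ℂ)
    * ((Real.exp (-(Real.cosh x)^2) : ℝ) : ℂ))) * hc

lemma hasDerivAt_psiC (Nψ : ℂ) (n : ℕ) (x : ℝ) :
    HasDerivAt (psiC Nψ n)
      (2 * (Real.cosh x : ℂ) * (((Real.sqrt n : ℝ) : ℂ) * psiC Nψ (n-1) x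
        + ((Real.sinh x / (2*(Real.cosh x)^2) : ℝ) : ℂ) * psiC Nψ n x)) x := by
  have h1 := ((hasDerivAt_psiR n x).ofReal_comp).const_mul (Cpsi Nψ n)
  have heq : psiC Nψ n = fun y => Cpsi Nψ n * ((psiR n y : ℝ) : ℂ) := rfl
  rw [heq]
  refine h1.congr_deriv ?_
  symm
  unfold psiC psiR
  have hc := coeff_psi Nψ n
  have hc0 : Complex.cosh (x:ℂ) ≠ 0 := by
    rw [← Complex.ofReal_cosh]
    exact_mod_cast (Real.cosh_pos x).ne'
  simp only [Complex.ofReal_mul, Complex.ofReal_add, Complex.ofReal_div, Complex.ofReal_pow,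
    Complex.ofReal_ofNat, Complex.ofReal_natCast, Complex.ofReal_cosh, Complex.ofReal_sinh]
  field_simp
  linear_combination (-(2 * (Complex.cosh (x:ℂ))^2 * ((hermiteH (n-1) (Real.sinh x) : ℝ) : ℂ))) * hc

lemma contDiff_phiR (n : ℕ) : ContDiff ℝ (⊤ : ℕ∞) (phiR n) :=
  ((hermiteH_contDiff n).comp Real.contDiff_sinh).mul
    (Real.contDiff_exp.comp ((Real.contDiff_cosh.pow 2).neg))

lemma contDiff_psiR (n : ℕ) : ContDiff ℝ (⊤ : ℕ∞) (psiR n) :=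
  ((hermiteH_contDiff n).comp Real.contDiff_sinh).mul Real.contDiff_cosh

lemma contDiff_phiC (Nφ : ℂ) (n : ℕ) : ContDiff ℝ (⊤ : ℕ∞) (phiC Nφ n) :=
  contDiff_const.mul (Complex.ofRealCLM.contDiff.comp (contDiff_phiR n))

lemma contDiff_psiC (Nψ : ℂ) (n : ℕ) : ContDiff ℝ (⊤ : ℕ∞) (psiC Nψ n) :=
  contDiff_const.mul (Complex.ofRealCLM.contDiff.comp (contDiff_psiR n))

lemma integral_deriv_zero (F : ℝ → ℂ) (hF : ContDiff ℝ 1 F) (hs : HasCompactSupport F) :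
    ∫ x : ℝ, deriv F x = 0 := by
  have h1 := hs.integral_Iic_deriv_eq hF 0
  have h2 := hs.integral_Ioi_deriv_eq hF 0
  have hi : Integrable (deriv F) :=
    ((hF.continuous_deriv le_rfl).integrable_of_hasCompactSupport hs.deriv)
  rw [← intervalIntegral.integral_Iic_add_Ioi hi.integrableOn hi.integrableOn, h1, h2]
  ring

lemma cosh_ne_zero' (t : ℝ) : ((Real.cosh t : ℝ) : ℂ) ≠ 0 := by
  exact_mod_cast (Real.cosh_pos t).ne'

lemma key_phi (Nφ : ℂ) (h : ℝ → ℂ) (hh : ContDiff ℝ (⊤ : ℕ∞) h) (hs : HasCompactSupport h) (n : ℕ) :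
    (∫ x : ℝ, (-(deriv (fun t => h t / (Real.cosh t : ℂ)) x)
        + 2 * (Real.sinh x : ℂ) * h x) * phiC Nφ n x)
      = ((Real.sqrt n : ℝ) : ℂ) * ∫ x : ℝ, h x * phiC Nφ (n-1) x := by
  have hcontC : ContDiff ℝ (⊤ : ℕ∞) fun t : ℝ => ((Real.cosh t : ℝ) : ℂ) :=
    Complex.ofRealCLM.contDiff.comp Real.contDiff_cosh
  set q : ℝ → ℂ := fun t => h t / ((Real.cosh t : ℝ) : ℂ) with hqdef
  have hq : ContDiff ℝ (⊤ : ℕ∞) q := by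
    have : q = fun t => h t * (((Real.cosh t : ℝ) : ℂ))⁻¹ := by
      funext t; simp only [hqdef]; rw [div_eq_mul_inv]
    rw [this]
    exact hh.mul (hcontC.inv fun t => cosh_ne_zero' t)
  have hqs : HasCompactSupport q := by
    rw [hqdef]
    simp only [div_eq_mul_inv]
    exact hs.mul_right
  set F : ℝ → ℂ := fun t => q t * phiC Nφ n t with hFdef
  have hFs : HasCompactSupport F := hqs.mul_right
  have hFd : ContDiff ℝ 1 F := (hq.mul (contDiff_phiC Nφ n)).of_le (by simp)
  have hptF : ∀ x : ℝ, deriv F x = deriv q x * phiC Nφ n x + q x *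
      ((Real.cosh x : ℂ) * (((Real.sqrt n : ℝ):ℂ) * phiC Nφ (n-1) x
        - 2*(Real.sinh x:ℂ)*phiC Nφ n x)) := by
    intro x
    have hq' : HasDerivAt q (deriv q x) x := ((hq.differentiable (by simp)) x).hasDerivAt
    exact (hq'.mul (hasDerivAt_phiC Nφ n x)).deriv
  have hpt : ∀ x : ℝ,
      (-(deriv (fun t => h t / (Real.cosh t : ℂ)) x) + 2 * (Real.sinh x : ℂ) * h x) * phiC Nφ n x
        = ((Real.sqrt n : ℝ):ℂ) * (h x * phiC Nφ (n-1) x) - deriv F x := by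
    intro x
    rw [hptF x]
    have hcc : Complex.cosh (x:ℂ) ≠ 0 := by
      rw [← Complex.ofReal_cosh]; exact cosh_ne_zero' x
    have hqc : ∀ A : ℂ, q x * (((Real.cosh x:ℝ):ℂ) * A) = h x * A := by
      intro A
      simp only [hqdef]
      rw [Complex.ofReal_cosh]
      field_simp
    rw [hqc]
    ring
  have hint1 : Integrable (fun x => h x * phiC Nφ (n-1) x) :=
    (hh.continuous.mul (contDiff_phiC Nφ (n-1)).continuous).integrable_of_hasCompactSupport
      hs.mul_right
  have hintD : Integrable (deriv F) :=
    (hFd.continuous_deriv le_rfl).integrable_of_hasCompactSupport hFs.deriv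
  rw [show (fun x : ℝ => (-(deriv (fun t => h t / (Real.cosh t : ℂ)) x)
        + 2 * (Real.sinh x : ℂ) * h x) * phiC Nφ n x)
      = fun x : ℝ => ((Real.sqrt n : ℝ):ℂ) * (h x * phiC Nφ (n-1) x) - deriv F x
    from funext hpt]
  rw [integral_sub (hint1.const_mul _) hintD, integral_const_mul,
    integral_deriv_zero F hFd hFs]
  ring

lemma key_psi (Nψ : ℂ) (h : ℝ → ℂ) (hh : ContDiff ℝ (⊤ : ℕ∞) h) (hs : HasCompactSupport h) (n : ℕ) :
    (∫ x : ℝ, (-(deriv (fun t => h t / (2 * (Real.cosh t : ℂ))) x)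
        - ((Real.sinh x / (2 * (Real.cosh x) ^ 2) : ℝ) : ℂ) * h x) * psiC Nψ n x)
      = ((Real.sqrt n : ℝ) : ℂ) * ∫ x : ℝ, h x * psiC Nψ (n-1) x := by
  have hcontC : ContDiff ℝ (⊤ : ℕ∞) fun t : ℝ => 2 * ((Real.cosh t : ℝ) : ℂ) :=
    contDiff_const.mul (Complex.ofRealCLM.contDiff.comp Real.contDiff_cosh)
  have hc2 : ∀ t : ℝ, 2 * ((Real.cosh t : ℝ) : ℂ) ≠ 0 := fun t =>
    mul_ne_zero two_ne_zero (cosh_ne_zero' t)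
  set q : ℝ → ℂ := fun t => h t / (2 * ((Real.cosh t : ℝ) : ℂ)) with hqdef
  have hq : ContDiff ℝ (⊤ : ℕ∞) q := by
    have : q = fun t => h t * (2 * ((Real.cosh t : ℝ) : ℂ))⁻¹ := by
      funext t; simp only [hqdef]; rw [div_eq_mul_inv]
    rw [this]
    exact hh.mul (hcontC.inv hc2)
  have hqs : HasCompactSupport q := by
    rw [hqdef]
    simp only [div_eq_mul_inv]
    exact hs.mul_right
  set F : ℝ → ℂ := fun t => q t * psiC Nψ n t with hFdef
  have hFs : HasCompactSupport F := hqs.mul_right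
  have hFd : ContDiff ℝ 1 F := (hq.mul (contDiff_psiC Nψ n)).of_le (by simp)
  have hptF : ∀ x : ℝ, deriv F x = deriv q x * psiC Nψ n x + q x *
      (2 * (Real.cosh x : ℂ) * (((Real.sqrt n : ℝ):ℂ) * psiC Nψ (n-1) x
        + ((Real.sinh x / (2*(Real.cosh x)^2) : ℝ) : ℂ) * psiC Nψ n x)) := by
    intro x
    have hq' : HasDerivAt q (deriv q x) x := ((hq.differentiable (by simp)) x).hasDerivAt
    exact (hq'.mul (hasDerivAt_psiC Nψ n x)).deriv
  have hpt : ∀ x : ℝ,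
      (-(deriv (fun t => h t / (2 * (Real.cosh t : ℂ))) x)
        - ((Real.sinh x / (2 * (Real.cosh x) ^ 2) : ℝ) : ℂ) * h x) * psiC Nψ n x
        = ((Real.sqrt n : ℝ):ℂ) * (h x * psiC Nψ (n-1) x) - deriv F x := by
    intro x
    rw [hptF x]
    have hcc : Complex.cosh (x:ℂ) ≠ 0 := by
      rw [← Complex.ofReal_cosh]; exact cosh_ne_zero' x
    have hqc : ∀ A : ℂ, q x * (2 * ((Real.cosh x:ℝ):ℂ) * A) = h x * A := by
      intro A
      simp only [hqdef]
      rw [Complex.ofReal_cosh]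
      field_simp
    rw [hqc]
    ring
  have hint1 : Integrable (fun x => h x * psiC Nψ (n-1) x) :=
    (hh.continuous.mul (contDiff_psiC Nψ (n-1)).continuous).integrable_of_hasCompactSupport
      hs.mul_right
  have hintD : Integrable (deriv F) :=
    (hFd.continuous_deriv le_rfl).integrable_of_hasCompactSupport hFs.deriv
  rw [show (fun x : ℝ => (-(deriv (fun t => h t / (2 * (Real.cosh t : ℂ))) x)
        - ((Real.sinh x / (2 * (Real.cosh x) ^ 2) : ℝ) : ℂ) * h x) * psiC Nψ n x)
      = fun x : ℝ => ((Real.sqrt n : ℝ):ℂ) * (h x * psiC Nψ (n-1) x) - deriv F x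
    from funext hpt]
  rw [integral_sub (hint1.const_mul _) hintD, integral_const_mul,
    integral_deriv_zero F hFd hFs]
  ring

lemma conj_ad (g : ℝ → ℂ) (hg : ContDiff ℝ (⊤ : ℕ∞) g) (x : ℝ) :
    (starRingEnd ℂ) (-(deriv (fun t => g t / (Real.cosh t : ℂ)) x)
        + 2 * (Real.sinh x : ℂ) * g x)
      = -(deriv (fun t => (starRingEnd ℂ) (g t) / (Real.cosh t : ℂ)) x)
        + 2 * (Real.sinh x : ℂ) * (starRingEnd ℂ) (g x) := by
  have hq : DifferentiableAt ℝ (fun t => g t / (Real.cosh t : ℂ)) x := by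
    have : (fun t => g t / (Real.cosh t : ℂ)) = fun t => g t * (((Real.cosh t : ℝ):ℂ))⁻¹ := by
      funext t; rw [div_eq_mul_inv]
    rw [this]
    exact ((hg.differentiable (by simp)) x).mul
      (((Complex.ofRealCLM.contDiff.comp Real.contDiff_cosh).differentiable one_ne_zero x).inv
        (cosh_ne_zero' x))
  have h1 : HasDerivAt (fun t => star (g t / (Real.cosh t : ℂ)))
      (star (deriv (fun t => g t / (Real.cosh t : ℂ)) x)) x := hq.hasDerivAt.star
  have h2 : (fun t => star (g t / (Real.cosh t : ℂ)))
      = fun t => (starRingEnd ℂ) (g t) / (Real.cosh t : ℂ) := by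
    funext t
    rw [← starRingEnd_apply, map_div₀, Complex.conj_ofReal]
  rw [h2] at h1
  rw [map_add, map_neg, map_mul, map_mul, Complex.conj_ofReal, h1.deriv]
  rw [← starRingEnd_apply, map_ofNat]

lemma conj_b (g : ℝ → ℂ) (hg : ContDiff ℝ (⊤ : ℕ∞) g) (x : ℝ) :
    (starRingEnd ℂ) (-(deriv (fun t => g t / (2 * (Real.cosh t : ℂ))) x)
        - ((Real.sinh x / (2 * (Real.cosh x) ^ 2) : ℝ) : ℂ) * g x)
      = -(deriv (fun t => (starRingEnd ℂ) (g t) / (2 * (Real.cosh t : ℂ))) x)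
        - ((Real.sinh x / (2 * (Real.cosh x) ^ 2) : ℝ) : ℂ) * (starRingEnd ℂ) (g x) := by
  have hq : DifferentiableAt ℝ (fun t => g t / (2 * (Real.cosh t : ℂ))) x := by
    have : (fun t => g t / (2 * (Real.cosh t : ℂ)))
        = fun t => g t * ((2:ℂ) * ((Real.cosh t : ℝ):ℂ))⁻¹ := by
      funext t; rw [div_eq_mul_inv]
    rw [this]
    exact ((hg.differentiable (by simp)) x).mul
      (((contDiff_const.mul
          (Complex.ofRealCLM.contDiff.comp Real.contDiff_cosh)).differentiable one_ne_zero x).inv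
        (mul_ne_zero two_ne_zero (cosh_ne_zero' x)))
  have h1 : HasDerivAt (fun t => star (g t / (2 * (Real.cosh t : ℂ))))
      (star (deriv (fun t => g t / (2 * (Real.cosh t : ℂ))) x)) x := hq.hasDerivAt.star
  have h2 : (fun t => star (g t / (2 * (Real.cosh t : ℂ))))
      = fun t => (starRingEnd ℂ) (g t) / (2 * (Real.cosh t : ℂ)) := by
    funext t
    rw [← starRingEnd_apply, map_div₀, map_mul, Complex.conj_ofReal, map_ofNat]
  rw [h2] at h1
  rw [map_sub, map_neg, map_mul, Complex.conj_ofReal, h1.deriv]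
  rw [← starRingEnd_apply]

lemma norm_phiC_le (Nφ : ℂ) (n : ℕ) (M x : ℝ) (hM : 0 ≤ M) (hx : |x| ≤ M) :
    ‖phiC Nφ n x‖ ≤ ‖Nφ‖ * (Real.sinh M + 1)^n := by
  have hK : 0 ≤ Real.sinh M := by rw [← Real.sinh_zero]; exact Real.sinh_le_sinh.2 hM
  have hH : |hermiteH n (Real.sinh x)| ≤ (2*Real.sinh M+2)^n * Real.sqrt n.factorial := by
    apply hermiteH_bound (Real.sinh M) hK
    calc |Real.sinh x| = Real.sinh |x| := Real.abs_sinh x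
      _ ≤ Real.sinh M := Real.sinh_le_sinh.2 hx
  have hE : Real.exp (-(Real.cosh x)^2) ≤ 1 := by
    rw [Real.exp_le_one_iff]
    nlinarith [Real.cosh_pos x]
  have hs0 : 0 < Real.sqrt n.factorial := sqrt_fact_pos n
  have h1 : ‖phiC Nφ n x‖ = ‖Nφ‖ / (2^n * Real.sqrt n.factorial)
      * (|hermiteH n (Real.sinh x)| * Real.exp (-(Real.cosh x)^2)) := by
    unfold phiC Cphi phiR
    rw [norm_mul, norm_div, norm_mul, norm_pow]
    rw [Complex.norm_real, Complex.norm_real, Real.norm_eq_abs, Real.norm_eq_abs,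
      abs_of_nonneg hs0.le, abs_mul, abs_of_pos (Real.exp_pos _)]
    norm_num
  rw [h1]
  have h2 : ‖Nφ‖ / (2^n * Real.sqrt n.factorial)
      * (|hermiteH n (Real.sinh x)| * Real.exp (-(Real.cosh x)^2))
      ≤ ‖Nφ‖ / (2^n * Real.sqrt n.factorial)
      * ((2*Real.sinh M+2)^n * Real.sqrt n.factorial * 1) := by
    apply mul_le_mul_of_nonneg_left _ (by positivity)
    apply mul_le_mul hH hE (Real.exp_pos _).le (by positivity)
  refine h2.trans (le_of_eq ?_)
  rw [mul_one, show (2*Real.sinh M+2 : ℝ) = 2*(Real.sinh M+1) by ring, mul_pow]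
  field_simp

lemma norm_psiC_le (Nψ : ℂ) (n : ℕ) (M x : ℝ) (hM : 0 ≤ M) (hx : |x| ≤ M) :
    ‖psiC Nψ n x‖ ≤ 2 * ‖Nψ‖ * Real.cosh M * (2*Real.sinh M+2)^n := by
  have hK : 0 ≤ Real.sinh M := by rw [← Real.sinh_zero]; exact Real.sinh_le_sinh.2 hM
  have hH : |hermiteH n (Real.sinh x)| ≤ (2*Real.sinh M+2)^n * Real.sqrt n.factorial := by
    apply hermiteH_bound (Real.sinh M) hK
    calc |Real.sinh x| = Real.sinh |x| := Real.abs_sinh x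
      _ ≤ Real.sinh M := Real.sinh_le_sinh.2 hx
  have hC : Real.cosh x ≤ Real.cosh M := by
    apply Real.cosh_le_cosh.2
    rw [abs_of_nonneg hM]
    exact hx
  have hs0 : 0 < Real.sqrt n.factorial := sqrt_fact_pos n
  have h1 : ‖psiC Nψ n x‖ = 2 * ‖Nψ‖ / Real.sqrt n.factorial
      * (|hermiteH n (Real.sinh x)| * Real.cosh x) := by
    unfold psiC Cpsi psiR
    rw [norm_mul, norm_div, norm_mul]
    rw [Complex.norm_real, Complex.norm_real, Real.norm_eq_abs, Real.norm_eq_abs,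
      abs_of_nonneg hs0.le, abs_mul, abs_of_pos (Real.cosh_pos _)]
    norm_num
  rw [h1]
  have h2 : 2 * ‖Nψ‖ / Real.sqrt n.factorial
      * (|hermiteH n (Real.sinh x)| * Real.cosh x)
      ≤ 2 * ‖Nψ‖ / Real.sqrt n.factorial
      * ((2*Real.sinh M+2)^n * Real.sqrt n.factorial * Real.cosh M) := by
    apply mul_le_mul_of_nonneg_left _ (by positivity)
    apply mul_le_mul hH hC (Real.cosh_pos _).le (by positivity)
  refine h2.trans (le_of_eq ?_)
  field_simp

lemma norm_integral_mul_le (h w : ℝ → ℂ) (hh : Continuous h) (hs : HasCompactSupport h)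
    (hw : Continuous w) (B : ℝ) (hB : ∀ x ∈ tsupport h, ‖w x‖ ≤ B) :
    ‖∫ x : ℝ, h x * w x‖ ≤ B * ∫ x : ℝ, ‖h x‖ := by
  have hint : Integrable (fun x => h x * w x) :=
    (hh.mul hw).integrable_of_hasCompactSupport hs.mul_right
  calc ‖∫ x : ℝ, h x * w x‖ ≤ ∫ x : ℝ, ‖h x * w x‖ := norm_integral_le_integral_norm _
    _ ≤ ∫ x : ℝ, B * ‖h x‖ := by
        apply integral_mono hint.norm
          ((hh.norm.integrable_of_hasCompactSupport hs.norm).const_mul B)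
        intro x
        by_cases hx : x ∈ tsupport h
        · simp only [norm_mul]
          have h1 := hB x hx
          have h2 := norm_nonneg (h x)
          have h3 := norm_nonneg (w x)
          calc ‖h x‖ * ‖w x‖ ≤ ‖h x‖ * B := mul_le_mul_of_nonneg_left h1 h2
            _ = B * ‖h x‖ := mul_comm _ _
        · simp [image_eq_zero_of_notMem_tsupport hx]
    _ = B * ∫ x : ℝ, ‖h x‖ := integral_const_mul B _

/-- the weak eigenvalue equations `⟨g, aΦ(z)⟩ = z⟨g, Φ(z)⟩` and
`⟨g, b†Ψ(z)⟩ = z⟨g, Ψ(z)⟩` for the weak bi-coherent states, tested against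
smooth compactly supported functions. -/
theorem stmt17 (Nφ Nψ : ℂ)
    (φ ψ : ℕ → ℝ → ℂ)
    (hφdef : ∀ n : ℕ, φ n = fun x =>
      Nφ / ((2 : ℂ) ^ n * (Real.sqrt n.factorial : ℂ))
        * (hermiteH n (Real.sinh x) : ℂ) * (Real.exp (-(Real.cosh x) ^ 2) : ℂ))
    (hψdef : ∀ n : ℕ, ψ n = fun x =>
      2 * Nψ / (Real.sqrt n.factorial : ℂ)
        * (hermiteH n (Real.sinh x) : ℂ) * (Real.cosh x : ℂ))
    (ad b : (ℝ → ℂ) → (ℝ → ℂ))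
    (haddef : ∀ g : ℝ → ℂ, ad g = fun x =>
      -(deriv (fun t => g t / (Real.cosh t : ℂ)) x) + 2 * (Real.sinh x : ℂ) * g x)
    (hbdef : ∀ g : ℝ → ℂ, b g = fun x =>
      -(deriv (fun t => g t / (2 * (Real.cosh t : ℂ))) x)
        - ((Real.sinh x / (2 * (Real.cosh x) ^ 2) : ℝ) : ℂ) * g x) :
    ∀ g : ℝ → ℂ, ContDiff ℝ (⊤ : ℕ∞) g → HasCompactSupport g → ∀ z : ℂ,
      Summable (fun n : ℕ => ‖z ^ n / (Real.sqrt n.factorial : ℂ)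
        * ∫ x : ℝ, (starRingEnd ℂ) (ad g x) * φ n x‖) ∧
      Summable (fun n : ℕ => ‖z ^ n / (Real.sqrt n.factorial : ℂ)
        * ∫ x : ℝ, (starRingEnd ℂ) (g x) * φ n x‖) ∧
      Summable (fun n : ℕ => ‖z ^ n / (Real.sqrt n.factorial : ℂ)
        * ∫ x : ℝ, (starRingEnd ℂ) (b g x) * ψ n x‖) ∧
      Summable (fun n : ℕ => ‖z ^ n / (Real.sqrt n.factorial : ℂ)
        * ∫ x : ℝ, (starRingEnd ℂ) (g x) * ψ n x‖) ∧
      (∑' n : ℕ, z ^ n / (Real.sqrt n.factorial : ℂ)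
          * ∫ x : ℝ, (starRingEnd ℂ) (ad g x) * φ n x)
        = z * ∑' n : ℕ, z ^ n / (Real.sqrt n.factorial : ℂ)
          * ∫ x : ℝ, (starRingEnd ℂ) (g x) * φ n x ∧
      (∑' n : ℕ, z ^ n / (Real.sqrt n.factorial : ℂ)
          * ∫ x : ℝ, (starRingEnd ℂ) (b g x) * ψ n x)
        = z * ∑' n : ℕ, z ^ n / (Real.sqrt n.factorial : ℂ)
          * ∫ x : ℝ, (starRingEnd ℂ) (g x) * ψ n x := by
  intro g hg hgs z
  have hφC : ∀ n, φ n = phiC Nφ n := by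
    intro n; rw [hφdef n]; funext x; unfold phiC Cphi phiR; push_cast; ring
  have hψC : ∀ n, ψ n = psiC Nψ n := by
    intro n; rw [hψdef n]; funext x; unfold psiC Cpsi psiR; push_cast; ring
  simp only [hφC, hψC]
  have hh : ContDiff ℝ (⊤ : ℕ∞) (fun x => (starRingEnd ℂ) (g x)) := by
    have h1 := ((starL' ℝ : ℂ ≃L[ℝ] ℂ).toContinuousLinearMap.contDiff).comp hg
    exact h1
  have hhs : HasCompactSupport (fun x => (starRingEnd ℂ) (g x)) :=
    hgs.comp_left (map_zero _)
  obtain ⟨M0, hM0⟩ := hgs.isBounded.subset_closedBall (0:ℝ)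
  set M := max M0 0 with hMdef
  have hM : 0 ≤ M := le_max_right _ _
  have habs : ∀ x ∈ tsupport g, |x| ≤ M := by
    intro x hx
    have h2 := hM0 hx
    rw [Metric.mem_closedBall, Real.dist_eq, sub_zero] at h2
    exact h2.trans (le_max_left _ _)
  have hts : tsupport (fun x => (starRingEnd ℂ) (g x)) ⊆ tsupport g := by
    apply closure_mono
    intro x hx
    simp only [Function.mem_support] at hx ⊢
    intro h0; apply hx; rw [h0, map_zero]
  have habs' : ∀ x ∈ tsupport (fun x => (starRingEnd ℂ) (g x)), |x| ≤ M :=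
    fun x hx => habs x (hts hx)
  set K := Real.sinh M with hKdef
  have hK : 0 ≤ K := by rw [hKdef, ← Real.sinh_zero]; exact Real.sinh_le_sinh.2 hM
  set CgI := ∫ x : ℝ, ‖(starRingEnd ℂ) (g x)‖ with hCgIdef
  have hCgI0 : 0 ≤ CgI := integral_nonneg (fun x => norm_nonneg _)
  have hIφ : ∀ n, ‖∫ x : ℝ, (starRingEnd ℂ) (g x) * phiC Nφ n x‖
      ≤ (‖Nφ‖ * (K+1)^n) * CgI := fun n =>
    norm_integral_mul_le _ _ hh.continuous hhs (contDiff_phiC Nφ n).continuous _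
      (fun x hx => norm_phiC_le Nφ n M x hM (habs' x hx))
  have hIψ : ∀ n, ‖∫ x : ℝ, (starRingEnd ℂ) (g x) * psiC Nψ n x‖
      ≤ (2*‖Nψ‖*Real.cosh M * (2*K+2)^n) * CgI := fun n =>
    norm_integral_mul_le _ _ hh.continuous hhs (contDiff_psiC Nψ n).continuous _
      (fun x hx => norm_psiC_le Nψ n M x hM (habs' x hx))
  have hnormsq : ∀ n : ℕ, ‖((Real.sqrt n.factorial : ℝ) : ℂ)‖ = Real.sqrt n.factorial := fun n => by
    rw [Complex.norm_real, Real.norm_eq_abs, abs_of_nonneg (sqrt_fact_pos n).le]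
  have hsummaker : ∀ (wI : ℕ → ℂ) (C r : ℝ), 0 ≤ C → 0 ≤ r → (∀ n, ‖wI n‖ ≤ C * r^n) →
      Summable (fun n => ‖z^n / (Real.sqrt n.factorial : ℂ) * wI n‖) := by
    intro wI C r hC hr hb
    apply Summable.of_nonneg_of_le (fun n => norm_nonneg _) (fun n => ?_)
      ((summable_pow_div_sqrt_factorial (‖z‖*r) (by positivity)).mul_left C)
    rw [norm_mul, norm_div, norm_pow, hnormsq n]
    calc ‖z‖^n / Real.sqrt n.factorial * ‖wI n‖
        ≤ ‖z‖^n / Real.sqrt n.factorial * (C * r^n) := by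
          apply mul_le_mul_of_nonneg_left (hb n) (by positivity)
      _ = C * ((‖z‖*r)^n / Real.sqrt n.factorial) := by rw [mul_pow]; ring
  have hsumIφ : Summable (fun n => ‖z^n / (Real.sqrt n.factorial : ℂ)
      * ∫ x : ℝ, (starRingEnd ℂ) (g x) * phiC Nφ n x‖) := by
    apply hsummaker _ (‖Nφ‖*CgI) (K+1) (by positivity) (by positivity)
    intro n
    calc ‖∫ x : ℝ, (starRingEnd ℂ) (g x) * phiC Nφ n x‖
        ≤ (‖Nφ‖ * (K+1)^n) * CgI := hIφ n
      _ = ‖Nφ‖*CgI * (K+1)^n := by ring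
  have hsumIψ : Summable (fun n => ‖z^n / (Real.sqrt n.factorial : ℂ)
      * ∫ x : ℝ, (starRingEnd ℂ) (g x) * psiC Nψ n x‖) := by
    apply hsummaker _ (2*‖Nψ‖*Real.cosh M*CgI) (2*K+2) (by positivity) (by positivity)
    intro n
    calc ‖∫ x : ℝ, (starRingEnd ℂ) (g x) * psiC Nψ n x‖
        ≤ (2*‖Nψ‖*Real.cosh M * (2*K+2)^n) * CgI := hIψ n
      _ = 2*‖Nψ‖*Real.cosh M*CgI * (2*K+2)^n := by ring
  have hJφ : ∀ n : ℕ, (∫ x : ℝ, (starRingEnd ℂ) (ad g x) * phiC Nφ n x)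
      = ((Real.sqrt n : ℝ):ℂ) * ∫ x : ℝ, (starRingEnd ℂ) (g x) * phiC Nφ (n-1) x := by
    intro n
    have hcongr : (∫ x : ℝ, (starRingEnd ℂ) (ad g x) * phiC Nφ n x)
        = ∫ x : ℝ, (-(deriv (fun t => (starRingEnd ℂ) (g t) / (Real.cosh t : ℂ)) x)
            + 2 * (Real.sinh x : ℂ) * (starRingEnd ℂ) (g x)) * phiC Nφ n x := by
      apply integral_congr_ae
      apply Filter.Eventually.of_forall
      intro x
      simp only [haddef g]
      rw [conj_ad g hg x]
    rw [hcongr]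
    exact key_phi Nφ _ hh hhs n
  have hJψ : ∀ n : ℕ, (∫ x : ℝ, (starRingEnd ℂ) (b g x) * psiC Nψ n x)
      = ((Real.sqrt n : ℝ):ℂ) * ∫ x : ℝ, (starRingEnd ℂ) (g x) * psiC Nψ (n-1) x := by
    intro n
    have hcongr : (∫ x : ℝ, (starRingEnd ℂ) (b g x) * psiC Nψ n x)
        = ∫ x : ℝ, (-(deriv (fun t => (starRingEnd ℂ) (g t) / (2 * (Real.cosh t : ℂ))) x)
            - ((Real.sinh x / (2 * (Real.cosh x) ^ 2) : ℝ) : ℂ) * (starRingEnd ℂ) (g x))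
              * psiC Nψ n x := by
      apply integral_congr_ae
      apply Filter.Eventually.of_forall
      intro x
      simp only [hbdef g]
      rw [conj_b g hg x]
    rw [hcongr]
    exact key_psi Nψ _ hh hhs n
  have hsfne : ∀ n : ℕ, ((Real.sqrt n.factorial : ℝ):ℂ) ≠ 0 := fun n => by
    exact_mod_cast (sqrt_fact_pos n).ne'
  have hs1ne : ∀ n : ℕ, ((Real.sqrt ((n:ℝ)+1) : ℝ):ℂ) ≠ 0 := fun n => by
    have h3 : (0:ℝ) < Real.sqrt ((n:ℝ)+1) := Real.sqrt_pos.2 (by positivity)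
    exact_mod_cast h3.ne'
  have hshift : ∀ (n : ℕ) (w : ℂ),
      z^(n+1) / (Real.sqrt (n+1).factorial : ℂ) * (((Real.sqrt (((n+1):ℕ)) : ℝ):ℂ) * w)
        = z * (z^n / (Real.sqrt n.factorial : ℂ) * w) := by
    intro n w
    have h1 : ((Real.sqrt (((n+1):ℕ):ℝ) : ℝ):ℂ) = ((Real.sqrt ((n:ℝ)+1) : ℝ):ℂ) := by
      push_cast
      ring_nf
    have h2 : ((Real.sqrt ((n+1).factorial) : ℝ):ℂ)
        = ((Real.sqrt ((n:ℝ)+1) : ℝ):ℂ) * ((Real.sqrt n.factorial : ℝ):ℂ) := by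
      rw [sqrt_fact_succ n]
      push_cast
      ring
    rw [h1, h2, show z^(n+1) = z * z^n from by ring]
    field_simp [hs1ne n, hsfne n]
  -- rewritten J-term functions
  have hfunφ : (fun n : ℕ => z ^ n / (Real.sqrt n.factorial : ℂ)
        * ∫ x : ℝ, (starRingEnd ℂ) (ad g x) * phiC Nφ n x)
      = fun n : ℕ => z ^ n / (Real.sqrt n.factorial : ℂ)
        * (((Real.sqrt n : ℝ):ℂ) * ∫ x : ℝ, (starRingEnd ℂ) (g x) * phiC Nφ (n-1) x) :=
    funext fun n => by rw [hJφ n]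
  have hfunψ : (fun n : ℕ => z ^ n / (Real.sqrt n.factorial : ℂ)
        * ∫ x : ℝ, (starRingEnd ℂ) (b g x) * psiC Nψ n x)
      = fun n : ℕ => z ^ n / (Real.sqrt n.factorial : ℂ)
        * (((Real.sqrt n : ℝ):ℂ) * ∫ x : ℝ, (starRingEnd ℂ) (g x) * psiC Nψ (n-1) x) :=
    funext fun n => by rw [hJψ n]
  have hsumJφ : Summable (fun n : ℕ => ‖z ^ n / (Real.sqrt n.factorial : ℂ)
      * ∫ x : ℝ, (starRingEnd ℂ) (ad g x) * phiC Nφ n x‖) := by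
    rw [show (fun n : ℕ => ‖z ^ n / (Real.sqrt n.factorial : ℂ)
        * ∫ x : ℝ, (starRingEnd ℂ) (ad g x) * phiC Nφ n x‖)
      = fun n : ℕ => ‖z ^ n / (Real.sqrt n.factorial : ℂ)
        * (((Real.sqrt n : ℝ):ℂ) * ∫ x : ℝ, (starRingEnd ℂ) (g x) * phiC Nφ (n-1) x)‖
      from funext fun n => by rw [hJφ n]]
    apply (summable_nat_add_iff 1).1
    have h4 : (fun n : ℕ => ‖z ^ (n+1) / (Real.sqrt (n+1).factorial : ℂ)
        * (((Real.sqrt ((n+1:ℕ)) : ℝ):ℂ) * ∫ x : ℝ, (starRingEnd ℂ) (g x) * phiC Nφ ((n+1)-1) x)‖)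
      = fun n : ℕ => ‖z‖ * ‖z ^ n / (Real.sqrt n.factorial : ℂ)
        * ∫ x : ℝ, (starRingEnd ℂ) (g x) * phiC Nφ n x‖ := by
      funext n
      simp only [Nat.add_sub_cancel]
      rw [hshift n, norm_mul]
    rw [h4]
    exact hsumIφ.mul_left _
  have hsumJψ : Summable (fun n : ℕ => ‖z ^ n / (Real.sqrt n.factorial : ℂ)
      * ∫ x : ℝ, (starRingEnd ℂ) (b g x) * psiC Nψ n x‖) := by
    rw [show (fun n : ℕ => ‖z ^ n / (Real.sqrt n.factorial : ℂ)
        * ∫ x : ℝ, (starRingEnd ℂ) (b g x) * psiC Nψ n x‖)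
      = fun n : ℕ => ‖z ^ n / (Real.sqrt n.factorial : ℂ)
        * (((Real.sqrt n : ℝ):ℂ) * ∫ x : ℝ, (starRingEnd ℂ) (g x) * psiC Nψ (n-1) x)‖
      from funext fun n => by rw [hJψ n]]
    apply (summable_nat_add_iff 1).1
    have h4 : (fun n : ℕ => ‖z ^ (n+1) / (Real.sqrt (n+1).factorial : ℂ)
        * (((Real.sqrt ((n+1:ℕ)) : ℝ):ℂ) * ∫ x : ℝ, (starRingEnd ℂ) (g x) * psiC Nψ ((n+1)-1) x)‖)
      = fun n : ℕ => ‖z‖ * ‖z ^ n / (Real.sqrt n.factorial : ℂ)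
        * ∫ x : ℝ, (starRingEnd ℂ) (g x) * psiC Nψ n x‖ := by
      funext n
      simp only [Nat.add_sub_cancel]
      rw [hshift n, norm_mul]
    rw [h4]
    exact hsumIψ.mul_left _
  refine ⟨hsumJφ, hsumIφ, hsumJψ, hsumIψ, ?_, ?_⟩
  · rw [hfunφ]
    have hsummJ : Summable (fun n : ℕ => z ^ n / (Real.sqrt n.factorial : ℂ)
        * (((Real.sqrt n : ℝ):ℂ) * ∫ x : ℝ, (starRingEnd ℂ) (g x) * phiC Nφ (n-1) x)) := by
      apply Summable.of_norm
      exact hsumJφ.congr (fun n => by rw [hJφ n])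
    rw [Summable.tsum_eq_zero_add hsummJ]
    have h0 : z ^ 0 / (Real.sqrt (0:ℕ).factorial : ℂ)
        * (((Real.sqrt ((0:ℕ)) : ℝ):ℂ) * ∫ x : ℝ, (starRingEnd ℂ) (g x) * phiC Nφ (0-1) x) = 0 := by
      norm_num
    rw [h0, zero_add]
    rw [show (fun n : ℕ => z ^ (n+1) / (Real.sqrt (n+1).factorial : ℂ)
        * (((Real.sqrt ((n+1:ℕ)) : ℝ):ℂ) * ∫ x : ℝ, (starRingEnd ℂ) (g x) * phiC Nφ ((n+1)-1) x))
      = fun n : ℕ => z * (z ^ n / (Real.sqrt n.factorial : ℂ)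
        * ∫ x : ℝ, (starRingEnd ℂ) (g x) * phiC Nφ n x)
      from funext fun n => by simp only [Nat.add_sub_cancel]; rw [hshift n]]
    exact tsum_mul_left
  · rw [hfunψ]
    have hsummJ : Summable (fun n : ℕ => z ^ n / (Real.sqrt n.factorial : ℂ)
        * (((Real.sqrt n : ℝ):ℂ) * ∫ x : ℝ, (starRingEnd ℂ) (g x) * psiC Nψ (n-1) x)) := by
      apply Summable.of_norm
      exact hsumJψ.congr (fun n => by rw [hJψ n])
    rw [Summable.tsum_eq_zero_add hsummJ]
    have h0 : z ^ 0 / (Real.sqrt (0:ℕ).factorial : ℂ)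
        * (((Real.sqrt ((0:ℕ)) : ℝ):ℂ) * ∫ x : ℝ, (starRingEnd ℂ) (g x) * psiC Nψ (0-1) x) = 0 := by
      norm_num
    rw [h0, zero_add]
    rw [show (fun n : ℕ => z ^ (n+1) / (Real.sqrt (n+1).factorial : ℂ)
        * (((Real.sqrt ((n+1:ℕ)) : ℝ):ℂ) * ∫ x : ℝ, (starRingEnd ℂ) (g x) * psiC Nψ ((n+1)-1) x))
      = fun n : ℕ => z * (z ^ n / (Real.sqrt n.factorial : ℂ)
        * ∫ x : ℝ, (starRingEnd ℂ) (g x) * psiC Nψ n x)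
      from funext fun n => by simp only [Nat.add_sub_cancel]; rw [hshift n]]
    exact tsum_mul_left
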